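/- Let d ≥ 1, let v₁, …, v_k ∈ ℤ^d be linearly independent over ℚ, and let φ : ℤ^d → ℤ be a group homomorphism with φ(vᵢ) > 0 for every i. For each n ∈ ℕ the set of lattice points u in the relative interior of the cone spanned by the vᵢ (i.e. u = Σᵢ λᵢ vᵢ with all λᵢ ∈ ℚ, λᵢ > 0) with φ(u) = n is finite; let c°_n denote its cardinality. Then in ℤ[[t]] one has (Σ_{n ∈ ℕ} c°_n tⁿ) · ∏_{i=1}^{k} (1 − t^{φ(vᵢ)}) = Σ_{p ∈ P°_τ} t^{φ(p)}, where P°_τ := {u ∈ ℤ^d : u = Σᵢ μᵢ vᵢ with μᵢ ∈ ℚ, 0 < μᵢ ≤ 1} is the (finite) upper half-open parallelotope. -/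

import Mathlib

/-- `u ∈ ℤ^d` lies in the relative interior of the simplicial cone spanned by
`v₁, …, v_k`, i.e. `u = Σᵢ λᵢ vᵢ` with all `λᵢ ∈ ℚ`, `λᵢ > 0`. -/
def coneIntMem (d k : ℕ) (v : Fin k → Fin d → ℤ) (u : Fin d → ℤ) : Prop :=
  ∃ lam : Fin k → ℚ, (∀ i, 0 < lam i) ∧ ∀ j, (u j : ℚ) = ∑ i, lam i * (v i j : ℚ)

/-- `u ∈ ℤ^d` lies in the upper half-open parallelotope
`P°_τ = {Σᵢ μᵢ vᵢ : 0 < μᵢ ≤ 1}`. -/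
def parUpperMem (d k : ℕ) (v : Fin k → Fin d → ℤ) (u : Fin d → ℤ) : Prop :=
  ∃ mu : Fin k → ℚ, (∀ i, 0 < mu i ∧ mu i ≤ 1) ∧ ∀ j, (u j : ℚ) = ∑ i, mu i * (v i j : ℚ)

/-!
Writing each coefficient `λᵢ > 0` of a cone point as `μᵢ + mᵢ` with `μᵢ ∈ (0, 1]` and `mᵢ ∈ ℕ`
identifies the interior lattice points of the cone with `P°_τ × ℕᵏ`, via
`(p, m) ↦ p + Σ mᵢ vᵢ`; linear independence makes this injective. Since `φ` is additive, the
graded counting series of the cone therefore factors as `(Σ_{p ∈ P°_τ} t^{φ p})` times the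
counting series of `ℕᵏ` weighted by `Σ mᵢ φ(vᵢ)`, which is `∏ᵢ (1 - t^{φ vᵢ})⁻¹`.
-/

open Finset PowerSeries

section CountSeries

variable {α β : Type*}

/-- `Σₓ X ^ w x` when `w` has finite fibres; an infinite fibre gives the junk coefficient `0`. -/
noncomputable def countSeries (w : α → ℕ) : PowerSeries ℤ :=
  PowerSeries.mk fun n => (Nat.card {x // w x = n} : ℤ)

theorem coeff_countSeries (w : α → ℕ) (n : ℕ) :
    coeff n (countSeries w) = Nat.card {x // w x = n} :=
  coeff_mk _ _

theorem countSeries_congr {w : α → ℕ} {w' : β → ℕ} (e : α ≃ β) (h : ∀ x, w' (e x) = w x) :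
    countSeries w' = countSeries w := by
  ext n
  rw [coeff_countSeries, coeff_countSeries,
    Nat.card_congr (e.subtypeEquiv fun x => by rw [h] : {x // w x = n} ≃ {y // w' y = n})]

theorem countSeries_eq_finsum [Finite α] (w : α → ℕ) : countSeries w = ∑ᶠ x, X ^ w x := by
  have := Fintype.ofFinite α
  ext n
  classical
  simp [finsum_eq_sum_of_fintype, coeff_countSeries, coeff_X_pow, Finset.sum_boole,
    Nat.card_eq_fintype_card, Fintype.card_subtype, eq_comm]

def fiberAddEquiv (w₁ : α → ℕ) (w₂ : β → ℕ) (n : ℕ) :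
    {x : α × β // w₁ x.1 + w₂ x.2 = n} ≃
      Σ ij : antidiagonal n, {a // w₁ a = ij.1.1} × {b // w₂ b = ij.1.2} where
  toFun x := ⟨⟨(w₁ x.1.1, w₂ x.1.2), mem_antidiagonal.2 x.2⟩, ⟨x.1.1, rfl⟩, ⟨x.1.2, rfl⟩⟩
  invFun y := ⟨(y.2.1, y.2.2), by rw [y.2.1.2, y.2.2.2]; exact mem_antidiagonal.1 y.1.2⟩
  left_inv _ := rfl
  right_inv := by
    rintro ⟨⟨⟨i, j⟩, hij⟩, ⟨a, ha⟩, ⟨b, hb⟩⟩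
    dsimp only at ha hb
    subst ha hb
    rfl

variable {w₁ : α → ℕ} {w₂ : β → ℕ}

theorem finite_fiber_add (h₁ : ∀ n, Finite {a // w₁ a = n}) (h₂ : ∀ n, Finite {b // w₂ b = n})
    (n : ℕ) : Finite {x : α × β // w₁ x.1 + w₂ x.2 = n} :=
  Finite.of_equiv _ (fiberAddEquiv w₁ w₂ n).symm

theorem countSeries_add (h₁ : ∀ n, Finite {a // w₁ a = n}) (h₂ : ∀ n, Finite {b // w₂ b = n}) :
    countSeries (fun x : α × β => w₁ x.1 + w₂ x.2) = countSeries w₁ * countSeries w₂ := by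
  ext n
  rw [coeff_mul, coeff_countSeries, Nat.card_congr (fiberAddEquiv w₁ w₂ n), Nat.card_sigma]
  push_cast
  simp only [Nat.card_prod, Nat.cast_mul, coeff_countSeries]
  exact Finset.sum_coe_sort (antidiagonal n) fun ij =>
    (Nat.card {a // w₁ a = ij.1} : ℤ) * Nat.card {b // w₂ b = ij.2}

theorem subsingleton_fiber_mul {a : ℕ} (ha : 0 < a) (n : ℕ) :
    Subsingleton {m : ℕ // m * a = n} :=
  ⟨fun x y => Subtype.ext (Nat.eq_of_mul_eq_mul_right ha (x.2.trans y.2.symm))⟩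

theorem coeff_countSeries_nat_mul {a : ℕ} (ha : 0 < a) (n : ℕ) :
    coeff n (countSeries fun m : ℕ => m * a) = if a ∣ n then 1 else 0 := by
  have := subsingleton_fiber_mul ha n
  rw [coeff_countSeries]
  split_ifs with h
  · have : Nonempty {m // m * a = n} := ⟨⟨n / a, Nat.div_mul_cancel h⟩⟩
    simp
  · have : IsEmpty {m // m * a = n} := ⟨fun m => h (Dvd.intro_left _ m.2)⟩
    simp

theorem countSeries_nat_mul_mul_one_sub {a : ℕ} (ha : 0 < a) :
    (countSeries fun m : ℕ => m * a) * (1 - X ^ a) = 1 := by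
  ext n
  simp only [mul_sub, mul_one, map_sub, coeff_mul_X_pow', coeff_countSeries_nat_mul ha, coeff_one]
  rcases Nat.eq_zero_or_pos n with rfl | hn
  · simp [ha.ne']
  rcases lt_or_ge n a with hlt | hle
  · simp [hn.ne', hlt.not_ge, Nat.not_dvd_of_pos_of_lt hn hlt]
  · simp [hn.ne', hle, Nat.dvd_sub_iff_left hle dvd_rfl]

theorem finite_fiber_sum_mul {k : ℕ} {a : Fin k → ℕ} (ha : ∀ i, 0 < a i) (n : ℕ) :
    Finite {m : Fin k → ℕ // ∑ i, m i * a i = n} := by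
  have hle (m : {m : Fin k → ℕ // ∑ i, m i * a i = n}) (i : Fin k) : m.1 i < n + 1 :=
    calc m.1 i ≤ m.1 i * a i := Nat.le_mul_of_pos_right _ (ha i)
      _ ≤ ∑ i, m.1 i * a i :=
        Finset.single_le_sum (f := fun i => m.1 i * a i) (fun _ _ => Nat.zero_le _) (mem_univ i)
      _ < n + 1 := by rw [m.2]; omega
  exact Finite.of_injective (fun m i => (⟨m.1 i, hle m i⟩ : Fin (n + 1)))
    fun m m' h => Subtype.ext (funext fun i => congrArg Fin.val (congrFun h i))

theorem countSeries_sum_mul_mul_prod_one_sub {k : ℕ} (a : Fin k → ℕ) (ha : ∀ i, 0 < a i) :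
    (countSeries fun m : Fin k → ℕ => ∑ i, m i * a i) * ∏ i, (1 - X ^ a i) = 1 := by
  induction k with
  | zero => simp [countSeries_eq_finsum, finsum_unique]
  | succ k ih =>
    have hsplit : (countSeries fun m : Fin (k + 1) → ℕ => ∑ i, m i * a i) =
        (countSeries fun m : ℕ => m * a 0) *
          countSeries fun m : Fin k → ℕ => ∑ i, m i * a i.succ := by
      rw [← countSeries_add (fun n => @Finite.of_subsingleton _ (subsingleton_fiber_mul (ha 0) n))
        (finite_fiber_sum_mul fun i => ha i.succ)]
      exact countSeries_congr (Fin.consEquiv fun _ => ℕ) fun x => by simp [Fin.sum_univ_succ]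
    rw [hsplit, Fin.prod_univ_succ, mul_mul_mul_comm, countSeries_nat_mul_mul_one_sub (ha 0),
      ih _ fun i => ha i.succ, one_mul]

end CountSeries

section Fractional

variable {K : Type*} [Field K] [LinearOrder K] [IsStrictOrderedRing K] [FloorSemiring K]

theorem Nat.ceil_add_natCast_of_mem_Ioc {μ : K} (hμ : μ ∈ Set.Ioc 0 1) (m : ℕ) :
    ⌈μ + m⌉₊ = 1 + m := by
  rw [Nat.ceil_add_natCast hμ.1.le, (Nat.ceil_eq_iff one_ne_zero).2 (by simpa using hμ)]

theorem natCast_eq_of_add_natCast_eq {μ μ' : K} {m m' : ℕ} (hμ : μ ∈ Set.Ioc 0 1)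
    (hμ' : μ' ∈ Set.Ioc 0 1) (h : μ + m = μ' + m') : m = m' := by
  have := congrArg Nat.ceil h
  rw [Nat.ceil_add_natCast_of_mem_Ioc hμ, Nat.ceil_add_natCast_of_mem_Ioc hμ'] at this
  omega

theorem exists_sub_natCast_mem_Ioc {x : K} (hx : 0 < x) : ∃ m : ℕ, x - m ∈ Set.Ioc 0 1 := by
  have hceil : ((⌈x⌉₊ - 1 : ℕ) : K) = ⌈x⌉₊ - 1 := by
    rw [Nat.cast_sub (Nat.one_le_ceil_iff.2 hx), Nat.cast_one]
  refine ⟨⌈x⌉₊ - 1, ?_, ?_⟩ <;> rw [hceil]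
  · linarith [Nat.ceil_lt_add_one hx.le]
  · linarith [Nat.le_ceil x]

end Fractional

section Cone

variable {d k : ℕ} {v : Fin k → Fin d → ℤ}

theorem eq_of_sum_mul_eq
    (hv : LinearIndependent ℚ (fun i : Fin k => fun j : Fin d => (v i j : ℚ)))
    {c c' : Fin k → ℚ} (h : ∀ j, ∑ i, c i * (v i j : ℚ) = ∑ i, c' i * (v i j : ℚ)) : c = c' := by
  refine hv.fintypeLinearCombination_injective (funext fun j => ?_)
  simpa [Fintype.linearCombination_apply, Finset.sum_apply] using h j

theorem cast_add_sum_nsmul_apply {p : Fin d → ℤ} {μ : Fin k → ℚ}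
    (hp : ∀ j, (p j : ℚ) = ∑ i, μ i * (v i j : ℚ)) (m : Fin k → ℕ) (j : Fin d) :
    ((p + ∑ i, m i • v i) j : ℚ) = ∑ i, (μ i + m i) * (v i j : ℚ) := by
  simp [Finset.sum_apply, hp j, add_mul, Finset.sum_add_distrib]

theorem coneIntMem_add_sum_nsmul {p : Fin d → ℤ} (hp : parUpperMem d k v p) (m : Fin k → ℕ) :
    coneIntMem d k v (p + ∑ i, m i • v i) := by
  obtain ⟨μ, hμ, hp⟩ := hp
  exact ⟨fun i => μ i + m i, fun i => by positivity [(hμ i).1], cast_add_sum_nsmul_apply hp m⟩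

theorem eq_and_eq_of_add_sum_nsmul_eq
    (hv : LinearIndependent ℚ (fun i : Fin k => fun j : Fin d => (v i j : ℚ)))
    {p p' : Fin d → ℤ} {m m' : Fin k → ℕ} (hp : parUpperMem d k v p)
    (hp' : parUpperMem d k v p') (h : p + ∑ i, m i • v i = p' + ∑ i, m' i • v i) :
    p = p' ∧ m = m' := by
  obtain ⟨μ, hμ, hp⟩ := hp
  obtain ⟨μ', hμ', hp'⟩ := hp'
  have hcoeff : (fun i => μ i + m i) = fun i => μ' i + m' i :=
    eq_of_sum_mul_eq hv fun j => by
      rw [← cast_add_sum_nsmul_apply hp, ← cast_add_sum_nsmul_apply hp', h]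
  have hm : m = m' := funext fun i =>
    natCast_eq_of_add_natCast_eq (hμ i) (hμ' i) (congrFun hcoeff i)
  subst hm
  exact ⟨add_right_cancel h, rfl⟩

theorem exists_parUpperMem_add_sum_nsmul_eq {u : Fin d → ℤ} (hu : coneIntMem d k v u) :
    ∃ (p : Fin d → ℤ) (m : Fin k → ℕ), parUpperMem d k v p ∧ p + ∑ i, m i • v i = u := by
  obtain ⟨lam, hlam, hu⟩ := hu
  choose m hm using fun i => exists_sub_natCast_mem_Ioc (hlam i)
  refine ⟨u - ∑ i, m i • v i, m, ⟨fun i => lam i - m i, hm, fun j => ?_⟩, sub_add_cancel _ _⟩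
  simp [Finset.sum_apply, hu j, sub_mul]

theorem cast_map_eq_sum_mul (φ : (Fin d → ℤ) →+ ℤ) {u : Fin d → ℤ} {lam : Fin k → ℚ}
    (hu : ∀ j, (u j : ℚ) = ∑ i, lam i * (v i j : ℚ)) :
    (φ u : ℚ) = ∑ i, lam i * (φ (v i) : ℚ) := by
  have hφ (x : Fin d → ℤ) :
      (φ x : ℚ) = ∑ j, (x j : ℚ) * φ (fun j' => if j = j' then 1 else 0) := by
    rw [← AddMonoidHom.coe_toIntLinearMap, LinearMap.pi_apply_eq_sum_univ φ.toIntLinearMap x]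
    simp only [smul_eq_mul, Int.cast_sum, Int.cast_mul]
  rw [hφ u]
  simp_rw [hu, fun i => hφ (v i), Finset.sum_mul, Finset.mul_sum, mul_assoc]
  exact Finset.sum_comm

theorem map_nonneg_of_parUpperMem {φ : (Fin d → ℤ) →+ ℤ} (hφ : ∀ i, 0 < φ (v i))
    {p : Fin d → ℤ} (hp : parUpperMem d k v p) : 0 ≤ φ p := by
  obtain ⟨μ, hμ, hp⟩ := hp
  have : (0 : ℚ) ≤ φ p := by
    rw [cast_map_eq_sum_mul φ hp]
    exact Finset.sum_nonneg fun i _ => mul_nonneg (hμ i).1.le (by exact_mod_cast (hφ i).le)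
  exact_mod_cast this

theorem finite_setOf_parUpperMem (v : Fin k → Fin d → ℤ) : {u | parUpperMem d k v u}.Finite := by
  refine (Set.finite_Icc (-fun j => ∑ i, |v i j|) fun j => ∑ i, |v i j|).subset ?_
  rintro u ⟨μ, hμ, hu⟩
  have hbound (j : Fin d) : |(u j : ℚ)| ≤ ∑ i, |(v i j : ℚ)| := by
    rw [hu j]
    refine (Finset.abs_sum_le_sum_abs _ _).trans (Finset.sum_le_sum fun i _ => ?_)
    rw [abs_mul, abs_of_pos (hμ i).1]
    exact mul_le_of_le_one_left (abs_nonneg _) (hμ i).2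
  have hbound' (j : Fin d) : |u j| ≤ ∑ i, |v i j| := by exact_mod_cast hbound j
  exact ⟨fun j => neg_le_of_abs_le (hbound' j), fun j => le_of_abs_le (hbound' j)⟩

noncomputable def coneEquiv
    (hv : LinearIndependent ℚ (fun i : Fin k => fun j : Fin d => (v i j : ℚ))) :
    {p | parUpperMem d k v p} × (Fin k → ℕ) ≃ {u | coneIntMem d k v u} :=
  Equiv.ofBijective (fun x => ⟨x.1 + ∑ i, x.2 i • v i, coneIntMem_add_sum_nsmul x.1.2 x.2⟩)
    ⟨fun x y h => by
      obtain ⟨hp, hm⟩ := eq_and_eq_of_add_sum_nsmul_eq hv x.1.2 y.1.2 (congrArg Subtype.val h)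
      exact Prod.ext (Subtype.ext hp) hm,
     fun u => by
      obtain ⟨p, m, hp, hu⟩ := exists_parUpperMem_add_sum_nsmul_eq u.2
      exact ⟨(⟨p, hp⟩, m), Subtype.ext hu⟩⟩

theorem map_coneEquiv
    (hv : LinearIndependent ℚ (fun i : Fin k => fun j : Fin d => (v i j : ℚ)))
    {φ : (Fin d → ℤ) →+ ℤ} (hφ : ∀ i, 0 < φ (v i))
    (x : {p | parUpperMem d k v p} × (Fin k → ℕ)) :
    φ (coneEquiv hv x) = ((φ x.1).toNat + ∑ i, x.2 i * (φ (v i)).toNat : ℕ) := by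
  have hp : 0 ≤ φ x.1 := map_nonneg_of_parUpperMem hφ x.1.2
  change φ (x.1 + ∑ i, x.2 i • v i) = _
  simp only [map_add, map_sum, map_nsmul]
  push_cast [nsmul_eq_mul]
  simp only [Int.toNat_of_nonneg hp, fun i => Int.toNat_of_nonneg (hφ i).le]

noncomputable def fiberConeEquiv
    (hv : LinearIndependent ℚ (fun i : Fin k => fun j : Fin d => (v i j : ℚ)))
    {φ : (Fin d → ℤ) →+ ℤ} (hφ : ∀ i, 0 < φ (v i)) (n : ℕ) :
    {x : {p | parUpperMem d k v p} × (Fin k → ℕ) //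
        (φ x.1).toNat + ∑ i, x.2 i * (φ (v i)).toNat = n} ≃
      {u | coneIntMem d k v u ∧ φ u = n} :=
  ((coneEquiv hv).subtypeEquiv fun x => by rw [map_coneEquiv hv hφ, Nat.cast_inj]).trans
    (Equiv.subtypeSubtypeEquivSubtypeInter (coneIntMem d k v) fun u => φ u = n)

end Cone

theorem stmt4_general (d k : ℕ)
    (v : Fin k → Fin d → ℤ)
    (hv : LinearIndependent ℚ (fun i : Fin k => fun j : Fin d => (v i j : ℚ)))
    (φ : (Fin d → ℤ) →+ ℤ) (hφ : ∀ i, 0 < φ (v i)) :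
    (∀ n : ℕ, {u : Fin d → ℤ | coneIntMem d k v u ∧ φ u = (n : ℤ)}.Finite) ∧
    ({u : Fin d → ℤ | parUpperMem d k v u}.Finite) ∧
    (PowerSeries.mk fun n : ℕ =>
        (({u : Fin d → ℤ | coneIntMem d k v u ∧ φ u = (n : ℤ)}.ncard : ℤ)))
      * ∏ i : Fin k, (1 - (PowerSeries.X : PowerSeries ℤ) ^ (φ (v i)).toNat)
      = ∑ᶠ p ∈ {u : Fin d → ℤ | parUpperMem d k v u},
          (PowerSeries.X : PowerSeries ℤ) ^ (φ p).toNat := by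
  have hP := finite_setOf_parUpperMem v
  have := hP.to_subtype
  have ha (i : Fin k) : 0 < (φ (v i)).toNat := Int.lt_toNat.2 (hφ i)
  have hfiber := finite_fiber_add (w₁ := fun p : {p | parUpperMem d k v p} => (φ p).toNat)
    (fun _ => inferInstance) (finite_fiber_sum_mul ha)
  refine ⟨fun n => Set.finite_coe_iff.1 (.of_equiv _ (fiberConeEquiv hv hφ n)), hP, ?_⟩
  have hseries : (PowerSeries.mk fun n : ℕ =>
      (({u : Fin d → ℤ | coneIntMem d k v u ∧ φ u = (n : ℤ)}.ncard : ℤ))) =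
      (countSeries fun p : {p | parUpperMem d k v p} => (φ p).toNat) *
        countSeries fun m : Fin k → ℕ => ∑ i, m i * (φ (v i)).toNat := by
    rw [← countSeries_add (fun _ => inferInstance) (finite_fiber_sum_mul ha)]
    ext n
    rw [coeff_mk, coeff_countSeries, ← Nat.card_coe_set_eq,
      Nat.card_congr (fiberConeEquiv hv hφ n)]
  rw [hseries, mul_assoc, countSeries_sum_mul_mul_prod_one_sub _ ha, mul_one,
    countSeries_eq_finsum]
  exact finsum_set_coe_eq_finsum_mem (f := fun p => (X : PowerSeries ℤ) ^ (φ p).toNat) _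

theorem stmt4 (d k : ℕ) (hd : 1 ≤ d) (hk : k ≤ d)
    (v : Fin k → Fin d → ℤ)
    (hv : LinearIndependent ℚ (fun i : Fin k => fun j : Fin d => (v i j : ℚ)))
    (φ : (Fin d → ℤ) →+ ℤ) (hφ : ∀ i, 0 < φ (v i)) :
    (∀ n : ℕ, {u : Fin d → ℤ | coneIntMem d k v u ∧ φ u = (n : ℤ)}.Finite) ∧
    ({u : Fin d → ℤ | parUpperMem d k v u}.Finite) ∧
    (PowerSeries.mk fun n : ℕ =>
        (({u : Fin d → ℤ | coneIntMem d k v u ∧ φ u = (n : ℤ)}.ncard : ℤ)))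
      * ∏ i : Fin k, (1 - (PowerSeries.X : PowerSeries ℤ) ^ (φ (v i)).toNat)
      = ∑ᶠ p ∈ {u : Fin d → ℤ | parUpperMem d k v u},
          (PowerSeries.X : PowerSeries ℤ) ^ (φ p).toNat :=
  stmt4_general d k v hv φ hφ
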